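/- arXiv:1406.0034 — 2 statements merged into one kernel-verified Lean document; each statement's English description precedes it below -/
import Mathlib

section
/- Mutual information as relative entropy: let ω be a faithful density matrix on ℂ^{d_S}⊗ℂ^{d_R} with marginals ρ = tr_R(ω) and ν = tr_S(ω). Then S(ω | ρ ⊗ ν) = S(ρ) + S(ν) − S(ω). In particular S(ρ) + S(ν) ≥ S(ω) (subadditivity of entropy). -/
open Matrix Kronecker ComplexOrder

/-- Logarithm of a matrix, defined via the spectral theorem for Hermitian matrices
(junk value `0` on non-Hermitian matrices).  Since `Real.log 0 = 0`, for a positive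
semidefinite matrix this is the logarithm taken on the support, with the convention
`log 0 = 0` on the kernel. -/
noncomputable def mlog {n : Type*} [Fintype n] [DecidableEq n] (A : Matrix n n ℂ) :
    Matrix n n ℂ :=
  if hA : A.IsHermitian then
    (hA.eigenvectorUnitary : Matrix n n ℂ) *
      Matrix.diagonal (fun i => (Real.log (hA.eigenvalues i) : ℂ)) *
      (star hA.eigenvectorUnitary : Matrix n n ℂ)
  else 0

/-- von Neumann entropy `S(ρ) = -tr(ρ log ρ)`. -/
noncomputable def vnEnt {n : Type*} [Fintype n] [DecidableEq n] (ρ : Matrix n n ℂ) : ℝ :=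
  -(Matrix.trace (ρ * mlog ρ)).re

/-- Relative entropy `S(ζ₁|ζ₂) = tr(ζ₁ (log ζ₁ - log ζ₂))`. -/
noncomputable def relEnt {n : Type*} [Fintype n] [DecidableEq n] (ζ₁ ζ₂ : Matrix n n ℂ) : ℝ :=
  (Matrix.trace (ζ₁ * (mlog ζ₁ - mlog ζ₂))).re

/-- A density matrix: positive semidefinite with unit trace. -/
def IsDensityMatrix {n : Type*} [Fintype n] [DecidableEq n] (ρ : Matrix n n ℂ) : Prop :=
  ρ.PosSemidef ∧ ρ.trace = 1

/-- Partial trace over the reservoir (second) factor: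
`(tr_R M)_{ij} = Σ_k M_{(i,k),(j,k)}`. -/
noncomputable def ptraceR {dS dR : ℕ} (M : Matrix (Fin dS × Fin dR) (Fin dS × Fin dR) ℂ) :
    Matrix (Fin dS) (Fin dS) ℂ :=
  Matrix.of fun i j => ∑ k, M (i, k) (j, k)

/-- Partial trace over the system (first) factor:
`(tr_S M)_{kl} = Σ_i M_{(i,k),(i,l)}`. -/
noncomputable def ptraceS {dS dR : ℕ} (M : Matrix (Fin dS × Fin dR) (Fin dS × Fin dR) ℂ) :
    Matrix (Fin dR) (Fin dR) ℂ :=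
  Matrix.of fun k l => ∑ i, M (i, k) (i, l)

/-- The Gibbs state `e^{-βH}/tr(e^{-βH})` at inverse temperature `β`. -/
noncomputable def gibbs {dR : ℕ} (β : ℝ) (H : Matrix (Fin dR) (Fin dR) ℂ) :
    Matrix (Fin dR) (Fin dR) ℂ :=
  (Matrix.trace (NormedSpace.exp ((-β : ℂ) • H)))⁻¹ • NormedSpace.exp ((-β : ℂ) • H)

/-- The trace norm `‖X‖₁ = tr((X*X)^{1/2})`. -/
noncomputable def traceNorm {n : Type*} [Fintype n] [DecidableEq n] (X : Matrix n n ℂ) : ℝ :=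
  (Matrix.trace
    (((Matrix.posSemidef_conjTranspose_mul_self X).1.eigenvectorUnitary : Matrix n n ℂ) *
      Matrix.diagonal (((↑) : ℝ → ℂ) ∘ (√·) ∘ (Matrix.posSemidef_conjTranspose_mul_self X).1.eigenvalues) *
      (star (Matrix.posSemidef_conjTranspose_mul_self X).1.eigenvectorUnitary : Matrix n n ℂ))).re


/-! Diagonalising `ρ = U diag(r) U⋆` and `ν = V diag(s) V⋆` gives
`ρ ⊗ ν = (U ⊗ V) diag(rᵢ sₖ) (U ⊗ V)⋆`, and since the logarithm of a diagonalised matrix may be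
computed in any diagonalisation, `log (ρ ⊗ ν) = log ρ ⊗ 1 + 1 ⊗ log ν`. Tracing against `ω`
turns the two terms into `tr (ρ log ρ)` and `tr (ν log ν)`, which is the identity.

Subadditivity is Klein's inequality `S(ω|σ) ≥ tr ω - tr σ`. In eigenbases of `ω` and `σ`, with
eigenvalues `p` and `q`, the matrix `|Wᵢⱼ|²` of the change of basis `W` is doubly stochastic, and
averaging the scalar inequality `p log p - p log q ≥ p - q` over it gives the claim. -/

open Unitary

namespace Matrix

variable {n : Type*} [Fintype n] [DecidableEq n]

theorem diagonal_comp_mul_eq_mul_diagonal_comp {R : Type*} [CommRing R] [NoZeroDivisors R]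
    {W : Matrix n n R} {d e : n → R} (h : diagonal d * W = W * diagonal e) (f : R → R) :
    diagonal (f ∘ d) * W = W * diagonal (f ∘ e) := by
  ext i j
  have hij : d i * W i j = W i j * e j := by simpa using congr_fun₂ h i j
  rcases eq_or_ne (W i j) 0 with hW | hW
  · simp [hW]
  · have hde : d i = e j := mul_right_cancel₀ hW (by rw [hij, mul_comm])
    simp [hde, mul_comm]

theorem conjStarAlgAut_diagonal_comp_eq (U V : unitary (Matrix n n ℂ)) {d e : n → ℝ}
    (h : conjStarAlgAut ℂ _ U (diagonal (RCLike.ofReal ∘ d))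
      = conjStarAlgAut ℂ _ V (diagonal (RCLike.ofReal ∘ e))) (f : ℝ → ℝ) :
    conjStarAlgAut ℂ _ U (diagonal (RCLike.ofReal ∘ f ∘ d))
      = conjStarAlgAut ℂ _ V (diagonal (RCLike.ofReal ∘ f ∘ e)) := by
  set W := star U * V
  have hV : V = U * W := by simp [W, ← mul_assoc]
  rw [hV, conjStarAlgAut_mul_apply] at h ⊢
  replace h := (conjStarAlgAut ℂ _ U).injective h
  congr 1
  have hcomm : diagonal (RCLike.ofReal ∘ d) * (W : Matrix n n ℂ)
      = (W : Matrix n n ℂ) * diagonal (RCLike.ofReal ∘ e) := by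
    rw [h, conjStarAlgAut_apply, mul_assoc, coe_star_mul_self, mul_one]
  have key := diagonal_comp_mul_eq_mul_diagonal_comp hcomm (fun z => ((f z.re : ℝ) : ℂ))
  have hcomp (c : n → ℝ) :
      (fun z : ℂ => ((f z.re : ℝ) : ℂ)) ∘ (RCLike.ofReal ∘ c) = RCLike.ofReal ∘ f ∘ c := by
    funext i
    simp
  rw [hcomp, hcomp] at key
  rw [conjStarAlgAut_apply, ← key, mul_assoc, mul_star_self_of_mem W.2, mul_one]

theorem isHermitian_conjStarAlgAut_diagonal (U : unitary (Matrix n n ℂ)) (d : n → ℝ) :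
    (conjStarAlgAut ℂ _ U (diagonal (RCLike.ofReal ∘ d))).IsHermitian := by
  rw [conjStarAlgAut_apply]
  exact isHermitian_mul_mul_conjTranspose _ (isHermitian_diagonal_of_self_adjoint _ (by
    ext i
    simp))

theorem trace_conjStarAlgAut {R : Type*} [CommRing R] [StarRing R] (U : unitary (Matrix n n R))
    (A : Matrix n n R) : (conjStarAlgAut R _ U A).trace = A.trace := by
  rw [conjStarAlgAut_apply, trace_mul_cycle, coe_star_mul_self, one_mul]

theorem trace_diagonal_mul_conjStarAlgAut_diagonal (W : unitary (Matrix n n ℂ)) (a b : n → ℂ) :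
    (diagonal a * conjStarAlgAut ℂ _ W (diagonal b)).trace
      = ∑ i, ∑ j, a i * b j * (Complex.normSq ((W : Matrix n n ℂ) i j) : ℂ) := by
  rw [conjStarAlgAut_apply, ← mul_assoc, ← mul_assoc, trace]
  refine Finset.sum_congr rfl fun i _ => ?_
  rw [diag_apply, mul_apply]
  refine Finset.sum_congr rfl fun j _ => ?_
  rw [mul_diagonal, diagonal_mul, star_apply, ← Complex.mul_conj, Complex.star_def]
  ring

theorem map_normSq_mem_doublyStochastic (W : unitary (Matrix n n ℂ)) :
    (W : Matrix n n ℂ).map Complex.normSq ∈ doublyStochastic ℝ n := by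
  refine mem_doublyStochastic_iff_sum.mpr ⟨fun i j => Complex.normSq_nonneg _, fun i => ?_,
    fun j => ?_⟩
  · have := congr_fun₂ (mem_unitaryGroup_iff.mp W.2) i i
    simp only [mul_apply, star_apply, one_apply_eq, Complex.star_def, Complex.mul_conj] at this
    simp only [map_apply]
    exact_mod_cast this
  · have := congr_fun₂ (mem_unitaryGroup_iff'.mp W.2) j j
    simp only [mul_apply, star_apply, one_apply_eq, Complex.star_def, mul_comm _ (_ : ℂ),
      Complex.mul_conj] at this
    simp only [map_apply]
    exact_mod_cast this

theorem sum_sub_sum_le_of_mem_doublyStochastic {w : Matrix n n ℝ} (hw : w ∈ doublyStochastic ℝ n)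
    {p q : n → ℝ} (hp : ∀ i, 0 ≤ p i) (hq : ∀ j, 0 < q j) :
    ∑ i, p i - ∑ j, q j
      ≤ ∑ i, p i * Real.log (p i) - ∑ i, ∑ j, w i j * (p i * Real.log (q j)) := by
  have hpq {p q : ℝ} (hp : 0 ≤ p) (hq : 0 < q) : p - q ≤ p * Real.log p - p * Real.log q := by
    rcases hp.eq_or_lt with rfl | hp
    · simpa using hq.le
    have h := mul_le_mul_of_nonneg_left (Real.log_le_sub_one_of_pos (div_pos hq hp)) hp.le
    rw [Real.log_div hq.ne' hp.ne', mul_sub_one, mul_div_cancel₀ _ hp.ne'] at h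
    linarith
  calc ∑ i, p i - ∑ j, q j = ∑ i, ∑ j, w i j * (p i - q j) := by
        simp only [mul_sub, Finset.sum_sub_distrib, ← Finset.sum_mul, ← Finset.mul_sum,
          sum_row_of_mem_doublyStochastic hw]
        rw [Finset.sum_comm]
        simp only [← Finset.sum_mul, sum_col_of_mem_doublyStochastic hw, one_mul]
    _ ≤ ∑ i, ∑ j, w i j * (p i * Real.log (p i) - p i * Real.log (q j)) :=
        Finset.sum_le_sum fun i _ => Finset.sum_le_sum fun j _ =>
          mul_le_mul_of_nonneg_left (hpq (hp i) (hq j)) (nonneg_of_mem_doublyStochastic hw)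
    _ = _ := by
        simp only [mul_sub, Finset.sum_sub_distrib, ← Finset.sum_mul,
          sum_row_of_mem_doublyStochastic hw, one_mul]

end Matrix

section Entropy

variable {n : Type*} [Fintype n] [DecidableEq n]

theorem mlog_of_isHermitian {A : Matrix n n ℂ} (hA : A.IsHermitian) :
    mlog A = conjStarAlgAut ℂ _ hA.eigenvectorUnitary
      (diagonal (RCLike.ofReal ∘ Real.log ∘ hA.eigenvalues)) := by
  rw [mlog, dif_pos hA]
  rfl

theorem mlog_conjStarAlgAut_diagonal (U : unitary (Matrix n n ℂ)) (d : n → ℝ) :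
    mlog (conjStarAlgAut ℂ _ U (diagonal (RCLike.ofReal ∘ d)))
      = conjStarAlgAut ℂ _ U (diagonal (RCLike.ofReal ∘ Real.log ∘ d)) := by
  have hA := isHermitian_conjStarAlgAut_diagonal U d
  rw [mlog_of_isHermitian hA]
  exact (conjStarAlgAut_diagonal_comp_eq U _ hA.spectral_theorem Real.log).symm

theorem trace_mul_mlog_self {A : Matrix n n ℂ} (hA : A.IsHermitian) :
    (A * mlog A).trace = ((∑ i, hA.eigenvalues i * Real.log (hA.eigenvalues i) : ℝ) : ℂ) := by
  conv_lhs => enter [1, 1]; rw [hA.spectral_theorem]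
  rw [mlog_of_isHermitian hA, ← map_mul, trace_conjStarAlgAut, diagonal_mul_diagonal,
    trace_diagonal]
  simp

theorem mlog_kronecker {m : Type*} [Fintype m] [DecidableEq m] {A : Matrix n n ℂ}
    {B : Matrix m m ℂ} (hA : A.PosDef) (hB : B.PosDef) :
    mlog (A ⊗ₖ B) = mlog A ⊗ₖ 1 + 1 ⊗ₖ mlog B := by
  set U := hA.1.eigenvectorUnitary
  set V := hB.1.eigenvectorUnitary
  set r := hA.1.eigenvalues
  set s := hB.1.eigenvalues
  let W : unitary (Matrix (n × m) (n × m) ℂ) := ⟨_, kronecker_mem_unitary U.2 V.2⟩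
  have hconj (X : Matrix n n ℂ) (Y : Matrix m m ℂ) :
      conjStarAlgAut ℂ _ W (X ⊗ₖ Y) = conjStarAlgAut ℂ _ U X ⊗ₖ conjStarAlgAut ℂ _ V Y := by
    simp only [conjStarAlgAut_apply, W, star_eq_conjTranspose, conjTranspose_kronecker,
      mul_kronecker_mul]
  have hdiag (a : n → ℝ) (b : m → ℝ) :
      diagonal (RCLike.ofReal ∘ a) ⊗ₖ diagonal (RCLike.ofReal ∘ b)
        = diagonal (RCLike.ofReal ∘ fun p : n × m => a p.1 * b p.2 : n × m → ℂ) := by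
    rw [diagonal_kronecker_diagonal]
    congr 1
    ext p
    simp
  have hAB :
      A ⊗ₖ B = conjStarAlgAut ℂ _ W (diagonal (RCLike.ofReal ∘ fun p => r p.1 * s p.2)) := by
    rw [← hdiag, hconj, ← hA.1.spectral_theorem, ← hB.1.spectral_theorem]
  have hlog : diagonal (RCLike.ofReal ∘ Real.log ∘ fun p : n × m => r p.1 * s p.2)
      = diagonal (RCLike.ofReal ∘ Real.log ∘ r) ⊗ₖ (1 : Matrix m m ℂ)
        + (1 : Matrix n n ℂ) ⊗ₖ diagonal (RCLike.ofReal ∘ Real.log ∘ s) := by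
    rw [← diagonal_one, ← diagonal_one, diagonal_kronecker_diagonal, diagonal_kronecker_diagonal,
      diagonal_add]
    congr 1
    ext p
    have hrs : Real.log (r p.1 * s p.2) = Real.log (r p.1) + Real.log (s p.2) :=
      Real.log_mul (hA.eigenvalues_pos p.1).ne' (hB.eigenvalues_pos p.2).ne'
    simp [hrs]
  rw [hAB, mlog_conjStarAlgAut_diagonal, mlog_of_isHermitian hA.1, mlog_of_isHermitian hB.1, hlog,
    map_add, hconj, hconj, map_one, map_one]

/-- Klein's inequality. -/
theorem trace_sub_trace_le_relEnt {A B : Matrix n n ℂ} (hA : A.PosSemidef) (hB : B.PosDef) :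
    (A.trace - B.trace).re ≤ relEnt A B := by
  set U := hA.1.eigenvectorUnitary
  set W := star U * hB.1.eigenvectorUnitary
  have hV : hB.1.eigenvectorUnitary = U * W := by simp [W, ← mul_assoc]
  have cross : (A * mlog B).trace.re = ∑ i, ∑ j, (W : Matrix n n ℂ).map Complex.normSq i j *
      (hA.1.eigenvalues i * Real.log (hB.1.eigenvalues j)) := by
    conv_lhs => enter [1, 1, 1]; rw [hA.1.spectral_theorem]
    rw [mlog_of_isHermitian hB.1, hV, conjStarAlgAut_mul_apply, ← map_mul, trace_conjStarAlgAut,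
      trace_diagonal_mul_conjStarAlgAut_diagonal]
    simp only [Complex.re_sum, map_apply, Function.comp_apply]
    refine Finset.sum_congr rfl fun i _ => Finset.sum_congr rfl fun j _ => ?_
    simp only [RCLike.ofReal_eq_complex_ofReal, ← Complex.ofReal_mul, Complex.ofReal_re]
    ring
  rw [relEnt, mul_sub, trace_sub, Complex.sub_re, Complex.sub_re, trace_mul_mlog_self hA.1,
    Complex.ofReal_re, cross, hA.1.trace_eq_sum_eigenvalues, hB.1.trace_eq_sum_eigenvalues,
    Complex.re_sum, Complex.re_sum]
  exact sum_sub_sum_le_of_mem_doublyStochastic (map_normSq_mem_doublyStochastic W)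
    hA.eigenvalues_nonneg hB.eigenvalues_pos

end Entropy

section PartialTrace

variable {dS dR : ℕ} (M : Matrix (Fin dS × Fin dR) (Fin dS × Fin dR) ℂ)

theorem ptraceR_eq_sum_submatrix : ptraceR M = ∑ k, M.submatrix (·, k) (·, k) := by
  ext i j
  simp [ptraceR, Matrix.sum_apply]

theorem ptraceS_eq_sum_submatrix : ptraceS M = ∑ i, M.submatrix (i, ·) (i, ·) := by
  ext k l
  simp [ptraceS, Matrix.sum_apply]

theorem Matrix.PosDef.ptraceR [Nonempty (Fin dR)]
    {M : Matrix (Fin dS × Fin dR) (Fin dS × Fin dR) ℂ} (hM : M.PosDef) : (ptraceR M).PosDef := by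
  rw [ptraceR_eq_sum_submatrix]
  exact posDef_sum Finset.univ_nonempty fun k _ => hM.submatrix fun i j h => by
    simpa using h

theorem Matrix.PosDef.ptraceS [Nonempty (Fin dS)]
    {M : Matrix (Fin dS × Fin dR) (Fin dS × Fin dR) ℂ} (hM : M.PosDef) : (ptraceS M).PosDef := by
  rw [ptraceS_eq_sum_submatrix]
  exact posDef_sum Finset.univ_nonempty fun i _ => hM.submatrix fun k l h => by
    simpa using h

theorem trace_mul_kronecker_one (A : Matrix (Fin dS) (Fin dS) ℂ) :
    (M * (A ⊗ₖ (1 : Matrix (Fin dR) (Fin dR) ℂ))).trace = (ptraceR M * A).trace := by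
  simp only [trace, diag_apply, mul_apply, Fintype.sum_prod_type, kroneckerMap_apply, one_apply,
    mul_ite, mul_one, mul_zero, Finset.sum_ite_eq', Finset.mem_univ, if_true, ptraceR, of_apply,
    Finset.sum_mul]
  exact Finset.sum_congr rfl fun i _ => Finset.sum_comm

theorem trace_mul_one_kronecker (B : Matrix (Fin dR) (Fin dR) ℂ) :
    (M * ((1 : Matrix (Fin dS) (Fin dS) ℂ) ⊗ₖ B)).trace = (ptraceS M * B).trace := by
  simp only [trace, diag_apply, mul_apply, Fintype.sum_prod_type, kroneckerMap_apply, one_apply,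
    ite_mul, one_mul, zero_mul, mul_ite, mul_zero, Finset.sum_ite_eq', Finset.mem_univ, if_true,
    Finset.sum_ite_irrel, Finset.sum_const_zero, ptraceS, of_apply, Finset.sum_mul]
  rw [Finset.sum_comm]
  exact Finset.sum_congr rfl fun k _ => Finset.sum_comm

theorem trace_ptraceR : (ptraceR M).trace = M.trace := by
  simpa using (trace_mul_kronecker_one M 1).symm

theorem trace_ptraceS : (ptraceS M).trace = M.trace := by
  simpa using (trace_mul_one_kronecker M 1).symm

theorem relEnt_ptraceR_kronecker_ptraceS (hρ : (ptraceR M).PosDef) (hν : (ptraceS M).PosDef) :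
    relEnt M (ptraceR M ⊗ₖ ptraceS M) = vnEnt (ptraceR M) + vnEnt (ptraceS M) - vnEnt M := by
  rw [relEnt, mlog_kronecker hρ hν, mul_sub, mul_add, trace_sub, trace_add,
    trace_mul_kronecker_one, trace_mul_one_kronecker, vnEnt, vnEnt, vnEnt]
  simp only [Complex.sub_re, Complex.add_re]
  ring

end PartialTrace

/-- **Mutual information as relative entropy.**
For a faithful density matrix `ω` on `ℂ^{d_S} ⊗ ℂ^{d_R}` with marginals
`ρ = tr_R ω` and `ν = tr_S ω`, one has `S(ω | ρ ⊗ ν) = S(ρ) + S(ν) - S(ω)`;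
in particular `S(ρ) + S(ν) ≥ S(ω)` (subadditivity of entropy). -/
theorem mutual_information_eq_and_subadditivity {dS dR : ℕ}
    (ω : Matrix (Fin dS × Fin dR) (Fin dS × Fin dR) ℂ)
    (hω : ω.PosDef) (hωtr : ω.trace = 1) :
    relEnt ω (ptraceR ω ⊗ₖ ptraceS ω)
        = vnEnt (ptraceR ω) + vnEnt (ptraceS ω) - vnEnt ω ∧
    vnEnt ω ≤ vnEnt (ptraceR ω) + vnEnt (ptraceS ω) := by
  obtain ⟨i, k⟩ : Nonempty (Fin dS × Fin dR) := by
    by_contra h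
    have := not_nonempty_iff.mp h
    simp [trace_eq_zero_of_isEmpty] at hωtr
  have : Nonempty (Fin dS) := ⟨i⟩
  have : Nonempty (Fin dR) := ⟨k⟩
  have hmi := relEnt_ptraceR_kronecker_ptraceS ω hω.ptraceR hω.ptraceS
  have hklein := trace_sub_trace_le_relEnt hω.posSemidef (hω.ptraceR.kronecker hω.ptraceS)
  rw [trace_kronecker, trace_ptraceR, trace_ptraceS, hωtr, hmi] at hklein
  refine ⟨hmi, ?_⟩
  norm_num at hklein
  linarith
end

section
/- Vanishing total work in the finite-reservoir adiabatic identity: let β > 0, let H be a Hermitian n×n complex matrix, and let γ ↦ K(γ) be a continuously differentiable path of Hermitian n×n matrices defined on a neighborhood of [0,1] such that tr(e^{−β(H+K(0))}) = tr(e^{−β(H+K(1))}). Then ∫₀¹ μ(γ)(K'(γ)) dγ = 0, where μ(γ)(X) = tr(e^{−β(H+K(γ))}·X)/tr(e^{−β(H+K(γ))}) is the instantaneous Gibbs state. -/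
/-!
For a continuous tracial functional `τ` on a Banach algebra, cyclicity collapses the derivative
`∑ i, x ^ (k - 1 - i) * h * x ^ i` of `x ^ k` to `k • τ (x ^ (k - 1) * h)`, so differentiating
the exponential series termwise gives `D (τ ∘ exp) x h = τ (exp x * h)`. For the trace along
`γ ↦ -β (H + K γ)` this says that the Gibbs expectation of `K' γ` is the derivative of the free
energy `-β⁻¹ log tr e^{-β (H + K γ)}`. The total work is therefore the free energy difference,
which vanishes when the partition functions at `γ = 0` and `γ = 1` agree.
-/

open Matrix Kronecker ComplexOrder

open NormedSpace
open scoped Nat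

theorem inv_factorial_succ_mul_succ {K : Type*} [Field K] [CharZero K] (k : ℕ) :
    ((k + 1)! : K)⁻¹ * ((k + 1 : ℕ) : K) = (k ! : K)⁻¹ := by
  rw [Nat.factorial_succ, Nat.cast_mul]
  field_simp

section TracialExp

variable {𝕂 𝔸 : Type*} [RCLike 𝕂] [NormedRing 𝔸] [NormedAlgebra 𝕂 𝔸]

theorem summable_norm_natCast_div_factorial_mul_pow_sub_one (R : ℝ) :
    Summable fun k => ‖(k !⁻¹ : 𝕂) * k‖ * R ^ (k - 1) := by
  refine (summable_nat_add_iff 1).mp ?_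
  simpa only [inv_factorial_succ_mul_succ, norm_inv, RCLike.norm_natCast, Nat.add_sub_cancel,
    div_eq_inv_mul] using Real.summable_pow_div_factorial R

theorem hasSum_natCast_div_factorial_smul_pow_sub_one [CompleteSpace 𝔸] (x : 𝔸) :
    HasSum (fun k => ((k !⁻¹ : 𝕂) * k) • x ^ (k - 1)) (exp x) := by
  refine (hasSum_nat_add_iff' 1).mp ?_
  simpa only [inv_factorial_succ_mul_succ, Nat.add_sub_cancel, Finset.sum_range_one,
    Nat.cast_zero, mul_zero, zero_smul, sub_zero] using exp_series_hasSum_exp' (𝕂 := 𝕂) x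

theorem hasFDerivAt_tracial_pow {τ : 𝔸 →L[𝕂] 𝕂} (hτ : ∀ a b, τ (a * b) = τ (b * a))
    (x : 𝔸) (k : ℕ) :
    HasFDerivAt (fun y => τ (y ^ k))
      ((k : 𝕂) • τ.comp (ContinuousLinearMap.mul 𝕂 𝔸 (x ^ (k - 1)))) x := by
  refine (τ.hasFDerivAt.comp x (hasFDerivAt_pow' k)).congr_fderiv ?_
  ext h
  have hcyclic : ∀ i ∈ Finset.range k,
      τ (x ^ (k - 1 - i) * h * x ^ i) = τ (x ^ (k - 1) * h) := by
    intro i hi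
    rw [hτ, ← mul_assoc, ← pow_add,
      Nat.add_sub_of_le (Nat.le_sub_one_of_lt (Finset.mem_range.mp hi))]
  simp [map_sum, Finset.sum_congr rfl hcyclic]

theorem hasFDerivAt_tracial_exp [NormOneClass 𝔸] [CompleteSpace 𝔸] {τ : 𝔸 →L[𝕂] 𝕂}
    (hτ : ∀ a b, τ (a * b) = τ (b * a)) (x : 𝔸) :
    HasFDerivAt (fun y => τ (exp y)) (τ.comp (ContinuousLinearMap.mul 𝕂 𝔸 (exp x))) x := by
  let Φ : 𝔸 →L[𝕂] 𝔸 →L[𝕂] 𝕂 := ContinuousLinearMap.compL 𝕂 𝔸 𝔸 𝕂 τ ∘L ContinuousLinearMap.mul 𝕂 𝔸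
  let c : ℕ → 𝕂 := fun k => (k !⁻¹ : 𝕂) * k
  have hterm : ∀ k y,
      HasFDerivAt (fun y => (k !⁻¹ : 𝕂) • τ (y ^ k)) (Φ (c k • y ^ (k - 1))) y := fun k y =>
    ((hasFDerivAt_tracial_pow hτ y k).const_smul (k !⁻¹ : 𝕂)).congr_fderiv <| by
      ext h
      simp [Φ, c, mul_assoc]
  let R := ‖x‖ + 1
  let u : ℕ → ℝ := fun k => ‖Φ‖ * (‖c k‖ * R ^ (k - 1))
  have hbound : ∀ k, ∀ y ∈ Metric.ball (0 : 𝔸) R, ‖Φ (c k • y ^ (k - 1))‖ ≤ u k := by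
    intro k y hy
    rw [mem_ball_zero_iff] at hy
    calc ‖Φ (c k • y ^ (k - 1))‖ ≤ ‖Φ‖ * (‖c k‖ * ‖y ^ (k - 1)‖) := by
          rw [← norm_smul]; exact Φ.le_opNorm _
      _ ≤ ‖Φ‖ * (‖c k‖ * R ^ (k - 1)) := by
          gcongr
          exact (norm_pow_le y _).trans (pow_le_pow_left₀ (norm_nonneg y) hy.le _)
  have hu : Summable u := (summable_norm_natCast_div_factorial_mul_pow_sub_one R).mul_left ‖Φ‖
  have hx : x ∈ Metric.ball (0 : 𝔸) R := by simp [R]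
  have hx₀ : Summable fun k => (k !⁻¹ : 𝕂) • τ (x ^ k) := by
    simpa [Function.comp_def] using
      (exp_series_hasSum_exp' (𝕂 := 𝕂) x).summable.map τ τ.continuous
  let _ : NormedSpace ℝ 𝔸 := NormedSpace.restrictScalars ℝ 𝕂 𝔸
  have h := hasFDerivAt_tsum_of_isPreconnected hu Metric.isOpen_ball
    (convex_ball (0 : 𝔸) R).isPreconnected (fun k y _ => hterm k y) hbound hx hx₀ hx
  have hsum : HasSum (fun k => Φ (c k • x ^ (k - 1))) (Φ (exp x)) :=
    (hasSum_natCast_div_factorial_smul_pow_sub_one x).map Φ Φ.continuous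
  have hexp : (fun y => τ (exp y)) = fun y => ∑' k, (k !⁻¹ : 𝕂) • τ (y ^ k) := funext fun y => by
    rw [exp_eq_tsum 𝕂, τ.map_tsum (exp_series_hasSum_exp' y).summable]
    simp only [map_smul]
  rw [hsum.tsum_eq] at h
  rw [hexp]
  exact h

end TracialExp

theorem Matrix.IsHermitian.trace_exp_pos {ι : Type*} [Fintype ι] [DecidableEq ι] [Nonempty ι]
    {A : Matrix ι ι ℂ} (hA : A.IsHermitian) : 0 < (NormedSpace.exp A).trace := by
  set B := NormedSpace.exp ((2⁻¹ : ℝ) • A)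
  have hB : B.IsHermitian := (hA.smul (IsSelfAdjoint.all _)).exp
  have hBB : NormedSpace.exp A = Bᴴ * B := by
    rw [hB.eq, ← Matrix.exp_add_of_commute _ _ (Commute.refl _), ← add_smul]
    norm_num
  have hB0 : B ≠ 0 := (Matrix.isUnit_exp _).ne_zero
  rw [hBB]
  exact (Matrix.posSemidef_conjTranspose_mul_self B).trace_nonneg.lt_of_ne'
    (Matrix.trace_conjTranspose_mul_self_eq_zero_iff.not.mpr hB0)

section LinftyOp

open scoped Matrix.Norms.Operator

theorem Matrix.continuous_exp {m 𝕂 : Type*} [Fintype m] [DecidableEq m] [RCLike 𝕂] :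
    Continuous (exp : Matrix m m 𝕂 → Matrix m m 𝕂) :=
  NormedSpace.exp_continuous

theorem Matrix.hasDerivAt_trace_exp {ι 𝕂 : Type*} [Fintype ι] [DecidableEq ι] [RCLike 𝕂]
    {M M' : ℝ → Matrix ι ι 𝕂} {t : ℝ} (hM : ∀ i j, HasDerivAt (fun s => M s i j) (M' t i j) t) :
    HasDerivAt (fun s => (exp (M s)).trace) ((exp (M t) * M' t).trace) t := by
  rcases isEmpty_or_nonempty ι with hι | hι
  · simpa [Matrix.trace] using hasDerivAt_const t (0 : 𝕂)
  have hpath : HasDerivAt M (M' t) t := by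
    let e : (ι → ι → 𝕂) →L[ℝ] Matrix ι ι 𝕂 :=
      LinearMap.toContinuousLinearMap (Matrix.ofLinearEquiv ℝ).toLinearMap
    exact e.hasFDerivAt.comp_hasDerivAt t (hasDerivAt_pi.2 fun i => hasDerivAt_pi.2 (hM i))
  let τ : Matrix ι ι 𝕂 →L[𝕂] 𝕂 := LinearMap.toContinuousLinearMap (Matrix.traceLinearMap ι 𝕂 𝕂)
  exact ((hasFDerivAt_tracial_exp (τ := τ) Matrix.trace_mul_comm (M t)).restrictScalars ℝ
    ).comp_hasDerivAt t hpath

end LinftyOp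

section FreeEnergy

variable {ι : Type*} [Fintype ι] [DecidableEq ι]

noncomputable def partitionFunction (β : ℝ) (A : Matrix ι ι ℂ) : ℝ :=
  (exp ((-β : ℂ) • A)).trace.re

noncomputable def freeEnergy (β : ℝ) (A : Matrix ι ι ℂ) : ℝ :=
  -β⁻¹ * Real.log (partitionFunction β A)

theorem partitionFunction_pos [Nonempty ι] (β : ℝ) {A : Matrix ι ι ℂ} (hA : A.IsHermitian) :
    0 < partitionFunction β A :=
  (Complex.pos_iff.mp (hA.smul (by simp [IsSelfAdjoint])).trace_exp_pos).1

theorem hasDerivAt_partitionFunction (β : ℝ) {A A' : ℝ → Matrix ι ι ℂ} {t : ℝ}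
    (hA' : ∀ i j, HasDerivAt (fun s => A s i j) (A' t i j) t) :
    HasDerivAt (fun s => partitionFunction β (A s))
      (-β * (exp ((-β : ℂ) • A t) * A' t).trace.re) t := by
  have hM : ∀ i j, HasDerivAt (fun s => ((-β : ℂ) • A s) i j) (((-β : ℂ) • A' t) i j) t :=
    fun i j => by simpa only [Matrix.smul_apply, smul_eq_mul] using (hA' i j).const_mul (-β : ℂ)
  simpa [partitionFunction, Function.comp_def, Matrix.mul_smul, Matrix.trace_smul] using
    Complex.reCLM.hasFDerivAt.comp_hasDerivAt t
      (Matrix.hasDerivAt_trace_exp (M' := fun _ => (-β : ℂ) • A' t) hM)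

theorem hasDerivAt_freeEnergy [Nonempty ι] {β : ℝ} (hβ : β ≠ 0) {A A' : ℝ → Matrix ι ι ℂ}
    {t : ℝ} (hA : (A t).IsHermitian) (hA' : ∀ i j, HasDerivAt (fun s => A s i j) (A' t i j) t) :
    HasDerivAt (fun s => freeEnergy β (A s))
      ((exp ((-β : ℂ) • A t) * A' t).trace.re / partitionFunction β (A t)) t :=
  (((hasDerivAt_partitionFunction β hA').log (partitionFunction_pos β hA).ne').const_mul
    (-β⁻¹)).congr_deriv (by field_simp)

theorem integral_gibbs_mean_eq_freeEnergy_sub [Nonempty ι] {β : ℝ} (hβ : β ≠ 0)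
    {A A' : ℝ → Matrix ι ι ℂ} {a b : ℝ} (hA : ∀ t ∈ Set.uIcc a b, (A t).IsHermitian)
    (hA' : ∀ t ∈ Set.uIcc a b, ∀ i j, HasDerivAt (fun s => A s i j) (A' t i j) t)
    (hA'c : ContinuousOn A' (Set.uIcc a b)) :
    ∫ t in a..b, (exp ((-β : ℂ) • A t) * A' t).trace.re / partitionFunction β (A t)
      = freeEnergy β (A b) - freeEnergy β (A a) := by
  refine intervalIntegral.integral_eq_sub_of_hasDerivAt
    (fun t ht => hasDerivAt_freeEnergy hβ (hA t ht) (hA' t ht)) (ContinuousOn.intervalIntegrable ?_)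
  have hAc : ContinuousOn A (Set.uIcc a b) := fun t ht => ContinuousAt.continuousWithinAt <|
    continuousAt_pi.2 fun i => continuousAt_pi.2 fun j => (hA' t ht i j).continuousAt
  have hexp : ContinuousOn (fun t => exp ((-β : ℂ) • A t)) (Set.uIcc a b) :=
    Matrix.continuous_exp.comp_continuousOn (hAc.fun_const_smul _)
  have hre_trace : Continuous fun M : Matrix ι ι ℂ => M.trace.re :=
    Complex.continuous_re.comp continuous_id.matrix_trace
  exact (hre_trace.comp_continuousOn (hexp.mul hA'c)).div (hre_trace.comp_continuousOn hexp)
    fun t ht => (partitionFunction_pos β (hA t ht)).ne'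

end FreeEnergy

theorem vanishing_total_work_general {n : ℕ}
    (β : ℝ) (hβ : 0 < β)
    (H : Matrix (Fin n) (Fin n) ℂ) (hH : H.IsHermitian)
    {J : Set ℝ} (hJ01 : Set.Icc (0 : ℝ) 1 ⊆ J)
    (K K' : ℝ → Matrix (Fin n) (Fin n) ℂ)
    (hK : ∀ γ ∈ J, (K γ).IsHermitian)
    (hKderiv : ∀ γ ∈ J, ∀ i j, HasDerivAt (fun s => K s i j) (K' γ i j) γ)
    (hKcont : ContinuousOn K' J)
    (hbc : Matrix.trace (NormedSpace.exp ((-β : ℂ) • (H + K 0)))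
        = Matrix.trace (NormedSpace.exp ((-β : ℂ) • (H + K 1)))) :
    ∫ γ in (0 : ℝ)..1,
        (Matrix.trace (NormedSpace.exp ((-β : ℂ) • (H + K γ)) * K' γ)).re /
          (Matrix.trace (NormedSpace.exp ((-β : ℂ) • (H + K γ)))).re = 0 := by
  rcases Nat.eq_zero_or_pos n with rfl | hn
  · simp [Matrix.trace]
  have : Nonempty (Fin n) := ⟨⟨0, hn⟩⟩
  have hIJ : Set.uIcc (0 : ℝ) 1 ⊆ J := by rwa [Set.uIcc_of_le zero_le_one]
  have hwork := integral_gibbs_mean_eq_freeEnergy_sub hβ.ne' (A := fun γ => H + K γ)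
    (fun γ hγ => hH.add (hK γ (hIJ hγ)))
    (fun γ hγ i j => (hKderiv γ (hIJ hγ) i j).const_add (H i j)) (hKcont.mono hIJ)
  refine hwork.trans ?_
  simp only [freeEnergy, partitionFunction, hbc, sub_self]

/-- **Vanishing total work in the finite-reservoir adiabatic identity.**
If `γ ↦ K(γ)` is a continuously differentiable path of Hermitian matrices on a
neighborhood of `[0,1]` with `tr(e^{-β(H+K(0))}) = tr(e^{-β(H+K(1))})`, then
`∫₀¹ μ(γ)(K'(γ)) dγ = 0`, where `μ(γ)` is the instantaneous Gibbs state
`X ↦ tr(e^{-β(H+K(γ))} X)/tr(e^{-β(H+K(γ))})`. -/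
theorem vanishing_total_work {n : ℕ}
    (β : ℝ) (hβ : 0 < β)
    (H : Matrix (Fin n) (Fin n) ℂ) (hH : H.IsHermitian)
    {J : Set ℝ} (hJ : IsOpen J) (hJ01 : Set.Icc (0 : ℝ) 1 ⊆ J)
    (K K' : ℝ → Matrix (Fin n) (Fin n) ℂ)
    (hK : ∀ γ ∈ J, (K γ).IsHermitian)
    (hKderiv : ∀ γ ∈ J, ∀ i j, HasDerivAt (fun s => K s i j) (K' γ i j) γ)
    (hKcont : ContinuousOn K' J)
    (hbc : Matrix.trace (NormedSpace.exp ((-β : ℂ) • (H + K 0)))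
        = Matrix.trace (NormedSpace.exp ((-β : ℂ) • (H + K 1)))) :
    ∫ γ in (0 : ℝ)..1,
        (Matrix.trace (NormedSpace.exp ((-β : ℂ) • (H + K γ)) * K' γ)).re /
          (Matrix.trace (NormedSpace.exp ((-β : ℂ) • (H + K γ)))).re = 0 :=
  vanishing_total_work_general β hβ H hH hJ01 K K' hK hKderiv hKcont hbc
end
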